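/- Let u be a monomial of R^[d], and let a = (a_1,...,a_s) be such that x_a = mv_{≺_Γ}(u), the ≺_Γ-smallest variable x_c with y^c dividing φ_d(u). If a_j - a_i ≥ 2 for some indices i, j, then the degree of φ_d(u) in the variable y_i equals exactly a_i. -/

import Mathlib

open MvPolynomial

/-- A term order on monomials (exponent vectors) of `MvPolynomial σ K`. -/
structure TermOrder (σ : Type*) where
  lo : LinearOrder (σ →₀ ℕ)
  zero_le : ∀ a : σ →₀ ℕ, lo.le 0 a
  add_lt : ∀ a b c : σ →₀ ℕ, lo.lt a b → lo.lt (a + c) (b + c)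

/-- The exponent vector of the initial (leading) term of `f`. -/
noncomputable def TermOrder.lead {σ K : Type*} [Field K]
    (t : TermOrder σ) (f : MvPolynomial σ K) : σ →₀ ℕ :=
  letI := t.lo
  f.support.max.unbotD 0

/-- The initial ideal of `I` w.r.t. the term order `t`. -/
noncomputable def initialIdeal {σ K : Type*} [Field K]
    (t : TermOrder σ) (I : Ideal (MvPolynomial σ K)) : Ideal (MvPolynomial σ K) :=
  Ideal.span { m : MvPolynomial σ K | ∃ f ∈ I, f ≠ 0 ∧ m = monomial (t.lead f) (1 : K) }

/-- `G` is a Gröbner basis of `I` w.r.t. `t`. -/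
def IsGB {σ K : Type*} [Field K] (t : TermOrder σ)
    (I : Ideal (MvPolynomial σ K)) (G : Set (MvPolynomial σ K)) : Prop :=
  G ⊆ (I : Set (MvPolynomial σ K)) ∧
    initialIdeal t I = Ideal.span ((fun g => monomial (t.lead g) (1 : K)) '' G)

/-- Total degree of an exponent vector. -/
def Fdeg {σ : Type*} (m : σ →₀ ℕ) : ℕ := m.sum fun _ n => n

/-- `t` is a reverse lexicographic order w.r.t. the strict variable order `vlt`. -/
def IsRevLex {σ : Type*} (vlt : σ → σ → Prop) (t : TermOrder σ) : Prop :=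
  ∀ α β : σ →₀ ℕ, t.lo.lt α β ↔
    Fdeg α < Fdeg β ∨
      (Fdeg α = Fdeg β ∧ ∃ j, β j < α j ∧ ∀ k, vlt k j → α k = β k)

/-- Variables of `R^[d]`: exponent vectors of degree `d` monomials of `K[y_1,…,y_s]`. -/
abbrev Vd (s d : ℕ) := {a : Fin s → ℕ // ∑ i, a i = d}

/-- The map `φ_d : R^[d] → S`, `x_a ↦ y^a`. -/
noncomputable def phi (K : Type*) [Field K] (s d : ℕ) :
    MvPolynomial (Vd s d) K →ₐ[K] MvPolynomial (Fin s) K :=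
  aeval fun a : Vd s d => ∏ i, X i ^ a.1 i

/-- Lexicographic strict order on `Fin s → ℕ`. -/
def lexLt {s : ℕ} (a b : Fin s → ℕ) : Prop :=
  ∃ j, (∀ i, i < j → a i = b i) ∧ a j < b j

/-- `Γ(a)`: the nondecreasing rearrangement of `a`. -/
noncomputable def Gam {s : ℕ} (a : Fin s → ℕ) : Fin s → ℕ := a ∘ Tuple.sort a

/-- The order on the variables of `R^[d]` : `x_a ≺_Γ x_b` iff `Γ(b) <lex Γ(a)`,
or `Γ(b) = Γ(a)` and `b <lex a`. -/
def varGammaLt {s : ℕ} (a b : Fin s → ℕ) : Prop :=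
  lexLt (Gam b) (Gam a) ∨ (Gam b = Gam a ∧ lexLt b a)

/-- `v` is `mv_{≺_Γ}(u)`: the `≺_Γ`-smallest variable `x_c` with `y^c ∣ φ_d(u)`. -/
def IsMvGamma {K : Type*} [Field K] {s d : ℕ} (u : Vd s d →₀ ℕ) (v : Vd s d) : Prop :=
  (∏ i, (X i : MvPolynomial (Fin s) K) ^ v.1 i) ∣ phi K s d (monomial u 1) ∧
    ∀ c : Vd s d, (∏ i, (X i : MvPolynomial (Fin s) K) ^ c.1 i) ∣ phi K s d (monomial u 1) →
      v = c ∨ varGammaLt v.1 c.1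

/-! ### Auxiliary lemmas -/

section Aux

variable {K : Type*} [Field K] {s d : ℕ}

/-- Exponent vector as a `Finsupp`. -/
noncomputable def Ffun {s : ℕ} (v : Fin s → ℕ) : Fin s →₀ ℕ :=
  Finsupp.equivFunOnFinite.symm v

@[simp] lemma Ffun_apply {s : ℕ} (v : Fin s → ℕ) (k : Fin s) : Ffun v k = v k := rfl

lemma prodX_eq (v : Fin s → ℕ) :
    ∏ i, (X i : MvPolynomial (Fin s) K) ^ v i = monomial (Ffun v) 1 := by
  rw [← prod_X_pow_eq_monomial]
  refine (Finset.prod_subset (Finset.subset_univ _) ?_).symm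
  intro x _ hx
  have hv : Ffun v x = 0 := by simpa [Finsupp.mem_support_iff] using hx
  rw [show v x = Ffun v x from rfl, hv, pow_zero]

/-- The exponent vector of `φ_d(u)`. -/
noncomputable def Wexp {s d : ℕ} (u : Vd s d →₀ ℕ) : Fin s →₀ ℕ :=
  u.sum fun c n => n • Ffun c.1

lemma phi_monomial (u : Vd s d →₀ ℕ) :
    phi K s d (monomial u 1) = monomial (Wexp u) (1 : K) := by
  rw [phi, aeval_monomial, map_one, one_mul, Wexp, Finsupp.sum, Finsupp.prod,
    monomial_sum_one]
  apply Finset.prod_congr rfl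
  intro c _
  rw [prodX_eq, monomial_pow, one_pow]

lemma dvd_phi_iff (v : Fin s → ℕ) (u : Vd s d →₀ ℕ) :
    (∏ i, (X i : MvPolynomial (Fin s) K) ^ v i) ∣ phi K s d (monomial u 1) ↔
      ∀ k, v k ≤ Wexp u k := by
  rw [prodX_eq, phi_monomial, monomial_dvd_monomial]
  constructor
  · rintro ⟨h1 | h1, -⟩
    · exact absurd h1 one_ne_zero
    · intro k; simpa using Finsupp.le_def.mp h1 k
  · intro h
    exact ⟨Or.inr (Finsupp.le_def.mpr fun k => by simpa using h k), dvd_refl _⟩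

/-- The count of entries of `g` that are `≤ t`. -/
def Ncount {s : ℕ} (g : Fin s → ℕ) (t : ℕ) : ℕ :=
  (Finset.univ.filter fun q => g q ≤ t).card

lemma Ncount_comp_perm (g : Fin s → ℕ) (σ : Equiv.Perm (Fin s)) (t : ℕ) :
    Ncount (g ∘ σ) t = Ncount g t := by
  classical
  unfold Ncount
  rw [← Fintype.card_subtype, ← Fintype.card_subtype]
  exact Fintype.card_congr (σ.subtypeEquiv fun q => Iff.rfl)

lemma Ncount_Gam (g : Fin s → ℕ) (t : ℕ) : Ncount (Gam g) t = Ncount g t :=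
  Ncount_comp_perm g (Tuple.sort g) t

lemma Ncount_le (g : Fin s → ℕ) (t : ℕ) : Ncount g t ≤ s := by
  classical
  calc Ncount g t ≤ (Finset.univ : Finset (Fin s)).card := Finset.card_filter_le _ _
  _ = s := by simp

lemma monotone_le_iff {g : Fin s → ℕ} (hg : Monotone g) (q : Fin s) (t : ℕ) :
    g q ≤ t ↔ q.1 < Ncount g t := by
  classical
  unfold Ncount
  constructor
  · intro h
    have hsub : Finset.Iic q ⊆ Finset.univ.filter fun r => g r ≤ t := by
      intro r hr
      simp only [Finset.mem_filter, Finset.mem_univ, true_and]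
      exact le_trans (hg (Finset.mem_Iic.mp hr)) h
    have := Finset.card_le_card hsub
    rw [Fin.card_Iic] at this
    omega
  · intro h
    by_contra hgt
    push_neg at hgt
    have hsub : (Finset.univ.filter fun r => g r ≤ t) ⊆ Finset.Iio q := by
      intro r hr
      simp only [Finset.mem_filter, Finset.mem_univ, true_and] at hr
      rw [Finset.mem_Iio]
      by_contra hle
      push_neg at hle
      exact absurd (le_trans (hg hle) hr) (by omega)
    have := Finset.card_le_card hsub
    rw [Fin.card_Iio] at this
    omega

lemma lexLt_of_counts {g h : Fin s → ℕ} (hg : Monotone g) (hh : Monotone h) (t : ℕ)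
    (hlt : Ncount h t < Ncount g t) (heq : ∀ t' < t, Ncount g t' = Ncount h t') :
    lexLt g h := by
  classical
  have hps : Ncount h t < s := lt_of_lt_of_le hlt (Ncount_le g t)
  set P : Fin s := ⟨Ncount h t, hps⟩ with hP
  have hPval : (P : ℕ) = Ncount h t := rfl
  have hgP : g P ≤ t := (monotone_le_iff hg P t).mpr (by omega)
  have hhP : ¬ h P ≤ t := by
    rw [monotone_le_iff hh P t]; omega
  have hne : g P ≠ h P := by omega
  have hSne : (Finset.univ.filter fun q => g q ≠ h q).Nonempty :=
    ⟨P, by simp [hne]⟩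
  set J := (Finset.univ.filter fun q => g q ≠ h q).min' hSne with hJ
  have hJmem : g J ≠ h J := by
    have := Finset.min'_mem _ hSne
    simpa using this
  have hJle : J ≤ P := Finset.min'_le _ P (by simp [hne])
  have hbefore : ∀ i, i < J → g i = h i := by
    intro i hi
    by_contra hne'
    exact absurd (Finset.min'_le _ i (by simp [hne'])) (not_le.mpr hi)
  have hgJ : g J ≤ t := by
    rw [monotone_le_iff hg J t]
    have hJP : (J : ℕ) ≤ (P : ℕ) := hJle
    omega
  refine ⟨J, hbefore, ?_⟩
  rcases lt_or_gt_of_ne hJmem with h1 | h1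
  · exact h1
  · exfalso
    have ht' : h J < t := lt_of_lt_of_le h1 hgJ
    have hcnt := heq (h J) ht'
    have : (J : ℕ) < Ncount h (h J) := (monotone_le_iff hh J (h J)).mp le_rfl
    have : (J : ℕ) < Ncount g (h J) := by omega
    have := (monotone_le_iff hg J (h J)).mpr this
    omega

lemma lexLt_asymm {g h : Fin s → ℕ} (h1 : lexLt g h) (h2 : lexLt h g) : False := by
  obtain ⟨j1, e1, l1⟩ := h1
  obtain ⟨j2, e2, l2⟩ := h2
  rcases lt_trichotomy j1 j2 with hc | hc | hc
  · have := e2 j1 hc; omega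
  · subst hc; omega
  · have := e1 j2 hc; omega

lemma lexLt_irrefl {g : Fin s → ℕ} (h1 : lexLt g g) : False := by
  obtain ⟨j, _, l⟩ := h1; omega

lemma sum_split (f : Fin s → ℕ) {i j : Fin s} (hij : i ≠ j) :
    ∑ k, f k = f i + (f j + ∑ k ∈ (Finset.univ.erase i).erase j, f k) := by
  classical
  rw [← Finset.add_sum_erase _ f (Finset.mem_univ i)]
  congr 1
  rw [← Finset.add_sum_erase _ f (Finset.mem_erase.mpr ⟨Ne.symm hij, Finset.mem_univ j⟩)]

end Aux

/-- if `x_a = mv_{≺_Γ}(u)` and `a j - a i ≥ 2`, then the degree of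
`φ_d(u)` in the variable `y_i` equals `a i`. -/
theorem stmt8 (K : Type*) [Field K] (s d : ℕ)
    (u : Vd s d →₀ ℕ) (a : Vd s d)
    (ha : IsMvGamma (K := K) u a)
    (i j : Fin s) (h : a.1 i + 2 ≤ a.1 j) :
    (phi K s d (monomial u 1)).degreeOf i = a.1 i := by
  classical
  have hij : i ≠ j := by
    intro he; rw [he] at h; omega
  have hji : j ≠ i := Ne.symm hij
  rw [phi_monomial, degreeOf_monomial_eq _ _ (one_ne_zero (α := K))]
  have hle : ∀ k, a.1 k ≤ Wexp u k := (dvd_phi_iff a.1 u).mp ha.1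
  by_contra hne
  have hlt : a.1 i < Wexp u i := lt_of_le_of_ne (hle i) (Ne.symm hne)
  -- the competing exponent vector
  set cf : Fin s → ℕ := Function.update (Function.update a.1 j (a.1 j - 1)) i (a.1 i + 1)
    with hcf
  have hcfi : cf i = a.1 i + 1 := by simp [hcf]
  have hcfj : cf j = a.1 j - 1 := by simp [hcf, Function.update_apply, hji]
  have hcfo : ∀ k, k ≠ i → k ≠ j → cf k = a.1 k := by
    intro k hki hkj
    simp [hcf, Function.update_apply, hki, hkj]
  have hsum : ∑ k, cf k = d := by
    rw [sum_split cf hij, hcfi, hcfj]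
    have h2 : ∑ k ∈ (Finset.univ.erase i).erase j, cf k
        = ∑ k ∈ (Finset.univ.erase i).erase j, a.1 k := by
      apply Finset.sum_congr rfl
      intro k hk
      simp only [Finset.mem_erase] at hk
      exact hcfo k hk.2.1 hk.1
    rw [h2]
    have h3 := sum_split a.1 hij
    rw [a.2] at h3
    omega
  set c : Vd s d := ⟨cf, hsum⟩ with hc
  have hdvd : (∏ k, (X k : MvPolynomial (Fin s) K) ^ c.1 k) ∣ phi K s d (monomial u 1) := by
    rw [dvd_phi_iff]
    intro k
    rcases eq_or_ne k i with rfl | hki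
    · rw [show c.1 k = a.1 k + 1 from hcfi]; omega
    rcases eq_or_ne k j with rfl | hkj
    · rw [show c.1 k = a.1 k - 1 from hcfj]
      have := hle k; omega
    · rw [show c.1 k = a.1 k from hcfo k hki hkj]; exact hle k
  -- counting comparison:  Ncount cf t vs Ncount a.1 t
  have hcnt_eq : ∀ t' < a.1 i, Ncount a.1 t' = Ncount cf t' := by
    intro t' ht'
    unfold Ncount
    congr 1
    apply Finset.filter_congr
    intro k _
    rcases eq_or_ne k i with rfl | hki
    · rw [hcfi]; omega
    rcases eq_or_ne k j with rfl | hkj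
    · rw [hcfj]; omega
    · rw [hcfo k hki hkj]
  have hcnt_lt : Ncount cf (a.1 i) < Ncount a.1 (a.1 i) := by
    apply Finset.card_lt_card
    constructor
    · intro k hk
      simp only [Finset.mem_filter, Finset.mem_univ, true_and] at hk ⊢
      rcases eq_or_ne k i with rfl | hki
      · have h1 := hcfi; omega
      rcases eq_or_ne k j with rfl | hkj
      · have h1 := hcfj; omega
      · have h1 := hcfo k hki hkj; omega
    · intro hsub
      have hi1 : i ∈ Finset.univ.filter fun q => a.1 q ≤ a.1 i := by simp
      have hi2 := hsub hi1
      simp only [Finset.mem_filter, Finset.mem_univ, true_and, hcfi] at hi2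
      omega
  have hmain : lexLt (Gam a.1) (Gam cf) := by
    apply lexLt_of_counts (Tuple.monotone_sort a.1) (Tuple.monotone_sort cf) (a.1 i)
    · rw [Ncount_comp_perm, Ncount_comp_perm]; exact hcnt_lt
    · intro t' ht'
      rw [Ncount_comp_perm, Ncount_comp_perm]; exact hcnt_eq t' ht'
  rcases ha.2 c hdvd with heq | hvg
  · have : a.1 i = cf i := by rw [heq]
    rw [hcfi] at this; omega
  · rcases hvg with h1 | ⟨h2, _⟩
    · exact lexLt_asymm hmain h1
    · rw [show Gam c.1 = Gam cf from rfl, h2] at hmain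
      exact lexLt_irrefl hmain
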